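/- arXiv:2401.09708 — 8 statements merged into one kernel-verified Lean document; each statement's English description precedes it below -/
import Mathlib

section
/- For every integer N ≥ 2, every simple circuit on N sites is equivalent to exactly one of the N−1 canonical circuits F_{q,r} with (q,r) ∈ Q_N: there exists (q,r) ∈ Q_N with F equivalent to F_{q,r}, and F_{q,r} is not equivalent to F_{q',r'} whenever (q,r) ≠ (q',r') in Q_N. -/
/-- A simple circuit on `N` sites: a sequence (indexed by time `Fin N`, 0-indexed)
of residues modulo `N` in which every residue occurs exactly once. -/
def IsSimpleCircuit (N : ℕ) (F : Fin N → ZMod N) : Prop := Function.Bijective F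

/-- Swap move: swap time-adjacent entries at (0-indexed) positions `k`, `k+1`
provided their difference is not ≡ -1, 0, 1 (mod N). -/
def SwapMove (N : ℕ) (F G : Fin N → ZMod N) : Prop :=
  ∃ k : ℕ, ∃ h : k + 1 < N,
    F ⟨k, Nat.lt_of_succ_lt h⟩ - F ⟨k + 1, h⟩ ≠ -1 ∧
    F ⟨k, Nat.lt_of_succ_lt h⟩ - F ⟨k + 1, h⟩ ≠ 0 ∧
    F ⟨k, Nat.lt_of_succ_lt h⟩ - F ⟨k + 1, h⟩ ≠ 1 ∧
    G = F ∘ Equiv.swap ⟨k, Nat.lt_of_succ_lt h⟩ ⟨k + 1, h⟩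

/-- Cyclic-shift move: `(i₁, i₂, …, i_N) ↦ (i₂, …, i_N, i₁)`. -/
def CycMove (N : ℕ) (F G : Fin N → ZMod N) : Prop :=
  G = F ∘ (finRotate N)

/-- Equivalence of circuits: finitely many swap/cyclic moves. -/
def CircuitEquiv (N : ℕ) : (Fin N → ZMod N) → (Fin N → ZMod N) → Prop :=
  Relation.EqvGen (fun F G => SwapMove N F G ∨ CycMove N F G)

/-- The set `Q_N` of admissible pairs `(q, r)`. -/
def QN (N : ℕ) : Set (ℕ × ℕ) :=
  {qr | 2 ≤ qr.1 ∧ qr.1 ≤ N ∧ qr.1 ∣ N ∧ 1 ≤ qr.2 ∧ qr.2 < qr.1 ∧ Nat.gcd qr.1 qr.2 = 1}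

/-- The canonical circuit `F_{q,r}`: the entry at 0-indexed time `l = j·(N/q) + i`
is the residue `1 + j·r + i·q (mod N)`. -/
def canonicalCircuit (N q r : ℕ) : Fin N → ZMod N :=
  fun l => ((1 + (l.val / (N / q)) * r + (l.val % (N / q)) * q : ℕ) : ZMod N)

/-- The double staircase circuit `F_p = (1, 2, …, N−p, N, N−1, …, N−p+1)`. -/
def doubleStaircase (N p : ℕ) : Fin N → ZMod N :=
  fun l => if l.val < N - p then ((l.val + 1 : ℕ) : ZMod N)
           else ((2 * N - p - l.val : ℕ) : ZMod N)

/-- The generalized staircase circuit `F_{N,r}`, whose entry at 1-indexed time `l`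
is `1 + (l−1)·r (mod N)`. -/
def staircase (N r : ℕ) : Fin N → ZMod N :=
  fun l => ((1 + l.val * r : ℕ) : ZMod N)

/-- The invariant `C(F)`: the number of (0-indexed) time indices `l` such that some
earlier entry equals `F l + 1 (mod N)`. -/
def Cinv (N : ℕ) (F : Fin N → ZMod N) : ℕ :=
  (Finset.univ.filter (fun l : Fin N => ∃ k : Fin N, k < l ∧ F k = F l + 1)).card

/-!
The complete invariant is the set of *descents* of a circuit: the residues `a` such that the
gate `a + 1` is applied before the gate `a`; `Cinv N F` is their number. A swap move keeps the
descents, and a cyclic shift replaces the descent `F₀ - 1` by `F₀` (`F₀` the first gate), so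
the number of descents is invariant. Conversely, two circuits with the same descents are
related by swaps: sort one into the other as in bubble sort, noting that two gates applied in
opposite orders by the two circuits act on disjoint sites. If `y - 1` is a descent and `y` is not,
the gate `y` can be swapped to the front and then shifted to the end, which moves the descent
`y - 1` to `y`. Pushing all descents up this way makes them a final segment of `ZMod N`, so
circuits with equally many descents are equivalent.

In `F_{q,r}`, with `m = N / q`, reducing mod `q` shows that the residue following the entry
`1 + j r + i q` of block `j` lies in block `j + b (mod q)`, where `b r ≡ 1 (mod q)`. Hence the
entries with an earlier successor are those of the last `b` blocks, and `C(F_{q,r}) = m b`.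
Since `gcd(m b, N) = m`, the map `(q, r) ↦ m b` is a bijection from `Q_N` onto
`{1, …, N - 1}`, the range of `C`.
-/

open Finset Function

variable {N : ℕ} {F G : Fin N → ZMod N}

noncomputable def timeOf (hF : Bijective F) (a : ZMod N) : Fin N :=
  (Equiv.ofBijective F hF).symm a

lemma apply_timeOf (hF : Bijective F) (a : ZMod N) : F (timeOf hF a) = a :=
  Equiv.ofBijective_apply_symm_apply F hF a

lemma timeOf_eq_iff (hF : Bijective F) {a : ZMod N} {l : Fin N} : timeOf hF a = l ↔ F l = a :=
  ⟨fun h => h ▸ apply_timeOf hF a, fun h => hF.injective (by rw [apply_timeOf hF a, h])⟩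

lemma timeOf_comp (hF : Bijective F) (σ : Equiv.Perm (Fin N)) (a : ZMod N) :
    timeOf (hF.comp σ.bijective) a = σ.symm (timeOf hF a) := by
  rw [timeOf_eq_iff]
  simp [apply_timeOf hF a]

def IsDescent (F : Fin N → ZMod N) (a : ZMod N) : Prop :=
  ∃ k l, k < l ∧ F k = a + 1 ∧ F l = a

instance (F : Fin N → ZMod N) : DecidablePred (IsDescent F) := fun _ => by
  unfold IsDescent; infer_instance

lemma isDescent_iff (hF : Bijective F) (a : ZMod N) :
    IsDescent F a ↔ timeOf hF (a + 1) < timeOf hF a := by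
  constructor
  · rintro ⟨k, l, hkl, hk, hl⟩
    rwa [(timeOf_eq_iff hF).2 hk, (timeOf_eq_iff hF).2 hl]
  · exact fun h => ⟨_, _, h, apply_timeOf hF _, apply_timeOf hF _⟩

def descents [NeZero N] (F : Fin N → ZMod N) : Finset (ZMod N) := {a | IsDescent F a}

lemma mem_descents [NeZero N] {a : ZMod N} : a ∈ descents F ↔ IsDescent F a := by
  simp [descents]

lemma cinv_eq_card_descents [NeZero N] (hF : Injective F) : Cinv N F = #(descents F) := by
  rw [Cinv, ← card_image_of_injective _ hF]
  congr 1
  ext a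
  simp only [mem_image, mem_filter, mem_univ, true_and, mem_descents]
  constructor
  · rintro ⟨l, ⟨k, hkl, hk⟩, rfl⟩
    exact ⟨k, l, hkl, hk, rfl⟩
  · rintro ⟨k, l, hkl, hk, rfl⟩
    exact ⟨l, ⟨k, hkl, hk⟩, rfl⟩

def GatesDisjoint (i j : ZMod N) : Prop := i ≠ j - 1 ∧ i ≠ j ∧ i ≠ j + 1

lemma swapMove_of_gatesDisjoint {k : ℕ} (hk : k + 1 < N)
    (h : GatesDisjoint (F ⟨k, by omega⟩) (F ⟨k + 1, hk⟩)) :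
    SwapMove N F (F ∘ Equiv.swap ⟨k, by omega⟩ ⟨k + 1, hk⟩) := by
  obtain ⟨h₁, h₂, h₃⟩ := h
  refine ⟨k, hk, ?_, ?_, ?_, rfl⟩
  · rwa [Ne, sub_eq_iff_eq_add, neg_add_eq_sub]
  · rwa [Ne, sub_eq_zero]
  · rwa [Ne, sub_eq_iff_eq_add, add_comm]

lemma SwapMove.symm (h : SwapMove N F G) : SwapMove N G F := by
  obtain ⟨k, hk, h₁, h₂, h₃, rfl⟩ := h
  refine ⟨k, hk, ?_, ?_, ?_, by ext; simp⟩ <;>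
    simp only [comp_apply, Equiv.swap_apply_left, Equiv.swap_apply_right] <;> rw [← neg_sub]
  · rwa [Ne, neg_eq_iff_eq_neg, neg_neg]
  · rwa [neg_ne_zero]
  · rwa [Ne, neg_eq_iff_eq_neg]

lemma SwapMove.bijective_iff (h : SwapMove N F G) : Bijective F ↔ Bijective G := by
  obtain ⟨k, hk, -, -, -, rfl⟩ := h
  exact (Bijective.of_comp_iff F (Equiv.swap _ _).bijective).symm

lemma swap_apply_lt_swap_apply {i j k l : Fin N} (hij : (j : ℕ) = i + 1) (hkl : k < l)
    (h : ¬(k = i ∧ l = j)) : Equiv.swap i j k < Equiv.swap i j l := by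
  simp only [Equiv.swap_apply_def]
  split_ifs <;> simp only [Fin.ext_iff, Fin.lt_def] at * <;> omega

lemma SwapMove.isDescent (h : SwapMove N F G) {a : ZMod N} (ha : IsDescent F a) :
    IsDescent G a := by
  obtain ⟨i, hi, -, -, h₃, rfl⟩ := h
  obtain ⟨k, l, hkl, hk, hl⟩ := ha
  set s := Equiv.swap (⟨i, by omega⟩ : Fin N) ⟨i + 1, hi⟩
  refine ⟨s k, s l, swap_apply_lt_swap_apply rfl hkl ?_, by simpa [s], by simpa [s]⟩
  rintro ⟨hki, hlj⟩
  exact h₃ (by rw [← hki, ← hlj, hk, hl, add_sub_cancel_left])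

lemma SwapMove.isDescent_iff (h : SwapMove N F G) (a : ZMod N) :
    IsDescent G a ↔ IsDescent F a :=
  ⟨h.symm.isDescent, h.isDescent⟩

lemma SwapMove.descents_eq [NeZero N] (h : SwapMove N F G) : descents G = descents F := by
  ext a
  simp only [mem_descents, h.isDescent_iff]

lemma finRotate_symm_lt_finRotate_symm_iff [NeZero N] {u v : Fin N} :
    (finRotate N).symm u < (finRotate N).symm v ↔ u ≠ 0 ∧ (v = 0 ∨ u < v) := by
  obtain ⟨n, rfl⟩ : ∃ n, N = n + 1 := Nat.exists_eq_succ_of_ne_zero (NeZero.ne N)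
  have hz : ((0 : Fin (n + 1)) : ℕ) = 0 := Fin.val_zero _
  rw [finRotate_symm_apply, finRotate_symm_apply, Fin.lt_def, Fin.coe_sub_one, Fin.coe_sub_one,
    Fin.lt_def]
  have := u.isLt
  split_ifs with hu hv hv <;> simp only [Fin.ext_iff, hz] at hu hv ⊢ <;> omega

lemma isDescent_comp_iff (hF : Bijective F) (σ : Equiv.Perm (Fin N)) (a : ZMod N) :
    IsDescent (F ∘ σ) a ↔ σ.symm (timeOf hF (a + 1)) < σ.symm (timeOf hF a) := by
  rw [isDescent_iff (hF.comp σ.bijective), timeOf_comp, timeOf_comp]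

lemma isDescent_comp_finRotate_iff [NeZero N] (hF : Bijective F) (a : ZMod N) :
    IsDescent (F ∘ finRotate N) a ↔ F 0 ≠ a + 1 ∧ (F 0 = a ∨ IsDescent F a) := by
  rw [isDescent_comp_iff hF, finRotate_symm_lt_finRotate_symm_iff, isDescent_iff hF,
    Ne, timeOf_eq_iff, timeOf_eq_iff]

lemma not_isDescent_apply_zero [NeZero N] (hF : Bijective F) : ¬IsDescent F (F 0) := by
  rw [isDescent_iff hF, (timeOf_eq_iff hF).2 rfl]
  exact Fin.not_lt_zero _

lemma isDescent_apply_zero_sub_one [Fact (1 < N)] (hF : Bijective F) : IsDescent F (F 0 - 1) := by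
  rw [isDescent_iff hF, sub_add_cancel, (timeOf_eq_iff hF).2 rfl, Fin.pos_iff_ne_zero, Ne,
    timeOf_eq_iff]
  exact (pred_ne_self _).symm

lemma descents_comp_finRotate [Fact (1 < N)] (hF : Bijective F) :
    descents (F ∘ finRotate N) = insert (F 0) ((descents F).erase (F 0 - 1)) := by
  ext a
  simp only [mem_descents, mem_insert, mem_erase, isDescent_comp_finRotate_iff hF, Ne,
    eq_sub_iff_add_eq, eq_comm (b := F 0)]
  constructor
  · rintro ⟨ha, rfl | ha'⟩
    exacts [Or.inl rfl, Or.inr ⟨ha, ha'⟩]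
  · rintro (rfl | ⟨ha, ha'⟩)
    exacts [⟨(succ_ne_self _).symm, Or.inl rfl⟩, ⟨ha, Or.inr ha'⟩]

lemma card_descents_comp_finRotate [Fact (1 < N)] (hF : Bijective F) :
    #(descents (F ∘ finRotate N)) = #(descents F) := by
  have hmem : F 0 - 1 ∈ descents F := mem_descents.2 (isDescent_apply_zero_sub_one hF)
  have hnmem : F 0 ∉ (descents F).erase (F 0 - 1) :=
    fun h => not_isDescent_apply_zero hF (mem_descents.1 (mem_of_mem_erase h))
  rw [descents_comp_finRotate hF, card_insert_of_notMem hnmem, card_erase_add_one hmem]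

lemma CycMove.bijective_iff (h : CycMove N F G) : Bijective F ↔ Bijective G := by
  rw [h]
  exact (Bijective.of_comp_iff F (finRotate N).bijective).symm

lemma CircuitEquiv.bijective_iff (h : CircuitEquiv N F G) : Bijective F ↔ Bijective G := by
  induction h with
  | rel _ _ h => rcases h with h | h; exacts [h.bijective_iff, h.bijective_iff]
  | refl => rfl
  | symm _ _ _ ih => exact ih.symm
  | trans _ _ _ _ _ ih₁ ih₂ => exact ih₁.trans ih₂

lemma CircuitEquiv.cinv_eq [Fact (1 < N)] (h : CircuitEquiv N F G) (hF : Bijective F) :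
    Cinv N F = Cinv N G := by
  induction h with
  | rel F G h =>
    have hG := (CircuitEquiv.bijective_iff (.rel _ _ h)).1 hF
    rw [cinv_eq_card_descents hF.injective, cinv_eq_card_descents hG.injective]
    rcases h with h | rfl
    exacts [congrArg card h.descents_eq.symm, (card_descents_comp_finRotate hF).symm]
  | refl => rfl
  | symm _ _ h ih => exact (ih ((CircuitEquiv.bijective_iff h).2 hF)).symm
  | trans _ _ _ h _ ih₁ ih₂ =>
    exact (ih₁ hF).trans (ih₂ ((CircuitEquiv.bijective_iff h).1 hF))

lemma one_le_cinv [Fact (1 < N)] (hF : Bijective F) : 1 ≤ Cinv N F := by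
  have hN : 1 < N := Fact.out
  let l : Fin N := ⟨N - 1, by omega⟩
  rw [cinv_eq_card_descents hF.injective, Nat.one_le_iff_ne_zero, Ne, card_eq_zero]
  refine ne_empty_of_mem (a := F l) (mem_descents.2 ((isDescent_iff hF _).2 ?_))
  rw [(timeOf_eq_iff hF).2 rfl]
  refine lt_of_le_of_ne (Fin.le_def.2 (Nat.le_sub_one_of_lt (Fin.is_lt _))) fun h => ?_
  exact succ_ne_self _ ((timeOf_eq_iff hF).1 h).symm

lemma cinv_lt [NeZero N] (hF : Bijective F) : Cinv N F < N := by
  rw [cinv_eq_card_descents hF.injective]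
  calc #(descents F) < #(univ : Finset (ZMod N)) :=
        card_lt_card ⟨subset_univ _, fun h => not_isDescent_apply_zero hF
          (mem_descents.1 (h (mem_univ _)))⟩
    _ = N := by rw [card_univ, ZMod.card]

lemma circuitEquiv_of_reflTransGen (h : Relation.ReflTransGen (SwapMove N) F G) :
    CircuitEquiv N F G :=
  Relation.EqvGen.reflTransGen_le_eqvGen _ _ _
    (Relation.ReflTransGen.mono (fun _ _ => Or.inl) _ _ h)

lemma descents_eq_of_reflTransGen [NeZero N] (h : Relation.ReflTransGen (SwapMove N) F G) :
    descents G = descents F := by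
  induction h with
  | refl => rfl
  | tail _ h ih => exact h.descents_eq.trans ih

lemma bijective_of_reflTransGen (h : Relation.ReflTransGen (SwapMove N) F G) (hF : Bijective F) :
    Bijective G :=
  (CircuitEquiv.bijective_iff (circuitEquiv_of_reflTransGen h)).1 hF

lemma exists_reflTransGen_swapMove_apply_eq {k p : ℕ} (hp : p < N) (hkp : k ≤ p)
    (hdisj : ∀ l : Fin N, k ≤ l.val → l.val < p → GatesDisjoint (F l) (F ⟨p, hp⟩)) :
    ∃ G, Relation.ReflTransGen (SwapMove N) F G ∧ G ⟨k, by omega⟩ = F ⟨p, hp⟩ ∧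
      ∀ l : Fin N, l.val < k → G l = F l := by
  obtain ⟨d, rfl⟩ := Nat.exists_eq_add_of_le hkp
  induction d generalizing F with
  | zero => exact ⟨F, .refl, rfl, fun _ _ => rfl⟩
  | succ d ih =>
    set s := Equiv.swap (⟨k + d, by omega⟩ : Fin N) ⟨k + d + 1, hp⟩
    have hs : ∀ l : Fin N, l.val < k + d → (F ∘ s) l = F l := fun l hl => by
      rw [comp_apply, Equiv.swap_apply_of_ne_of_ne] <;> simp [Fin.ext_iff] <;> omega
    have hsd : (F ∘ s) ⟨k + d, by omega⟩ = F ⟨k + (d + 1), hp⟩ := by simp [s]; rfl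
    obtain ⟨G, hFG, hGk, hG⟩ := ih (F := F ∘ s) (by omega) (by omega) fun l hkl hld => by
      rw [hs l hld, hsd]
      exact hdisj l hkl (by omega)
    refine ⟨G, .head (swapMove_of_gatesDisjoint hp (hdisj _ le_self_add (by simp))) hFG,
      hGk.trans hsd, fun l hl => (hG l hl).trans (hs l (by omega))⟩

lemma gatesDisjoint_of_lt_of_lt [NeZero N] (hF : Bijective F) (hG : Bijective G)
    (hD : descents F = descents G) {a : ZMod N} {l : Fin N} (hlF : l < timeOf hF a)
    (hlG : timeOf hG a < timeOf hG (F l)) : GatesDisjoint (F l) a := by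
  have hD' (b : ZMod N) : IsDescent F b ↔ IsDescent G b := by
    rw [← mem_descents, hD, mem_descents]
  have hl : timeOf hF (F l) = l := (timeOf_eq_iff hF).2 rfl
  generalize F l = y at hl hlG ⊢
  refine ⟨?_, ?_, ?_⟩ <;> rintro rfl
  · have h := (hD' _).2 ((isDescent_iff hG _).2 (by rwa [sub_add_cancel]))
    rw [isDescent_iff hF, sub_add_cancel, hl] at h
    exact lt_asymm h hlF
  · exact hlF.ne hl.symm
  · exact lt_asymm ((isDescent_iff hG a).1 ((hD' a).1 ((isDescent_iff hF a).2 (by rwa [hl])))) hlG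

lemma le_timeOf_of_eq_of_lt {k : ℕ} (hG : Bijective G) (hF : Injective F)
    (hFG : ∀ l : Fin N, l.val < k → F l = G l) {l : Fin N} (hl : k ≤ l.val) :
    k ≤ timeOf hG (F l) := by
  by_contra! ht
  have := hF ((hFG _ ht).trans (apply_timeOf hG (F l)))
  rw [this] at ht
  omega

theorem reflTransGen_swapMove_of_descents_eq [NeZero N] (hF : Bijective F) (hG : Bijective G)
    (hD : descents F = descents G) : Relation.ReflTransGen (SwapMove N) F G := by
  suffices ∀ k ≤ N, ∃ F', Relation.ReflTransGen (SwapMove N) F F' ∧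
      ∀ l : Fin N, l.val < k → F' l = G l by
    obtain ⟨F', hFF', hF'G⟩ := this N le_rfl
    rwa [funext fun l => hF'G l l.isLt] at hFF'
  intro k
  induction k with
  | zero => exact fun _ => ⟨F, .refl, fun _ h => absurd h (Nat.not_lt_zero _)⟩
  | succ k ih =>
    intro hk
    obtain ⟨F', hFF', hF'G⟩ := ih (by omega)
    have hF' := bijective_of_reflTransGen hFF' hF
    have hD' : descents F' = descents G := (descents_eq_of_reflTransGen hFF').trans hD
    set a := G ⟨k, hk⟩
    have hGa : timeOf hG a = ⟨k, hk⟩ := (timeOf_eq_iff hG).2 rfl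
    have hka : k ≤ timeOf hF' a :=
      le_timeOf_of_eq_of_lt hF' hG.injective (fun l hl => (hF'G l hl).symm) le_rfl
    obtain ⟨F'', hF'F'', hF''k, hF''F'⟩ := exists_reflTransGen_swapMove_apply_eq (F := F')
      (timeOf hF' a).isLt hka fun l hkl hla => by
        rw [Fin.eta, apply_timeOf hF' a]
        refine gatesDisjoint_of_lt_of_lt hF' hG hD' hla (lt_of_le_of_ne ?_ fun h => ?_)
        · rw [hGa]
          exact le_timeOf_of_eq_of_lt hG hF'.injective hF'G hkl
        · have h' := congrArg G h
          rw [apply_timeOf hG, apply_timeOf hG, ← apply_timeOf hF' a] at h'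
          exact hla.ne (congrArg Fin.val (hF'.injective h')).symm
    refine ⟨F'', hFF'.trans hF'F'', fun l hl => ?_⟩
    rcases Nat.lt_succ_iff_lt_or_eq.1 hl with hl | hl
    · exact (hF''F' l hl).trans (hF'G l hl)
    · obtain rfl : l = ⟨k, hk⟩ := Fin.ext hl
      exact hF''k.trans (apply_timeOf hF' a)

lemma exists_circuitEquiv_descents_eq_insert_erase [Fact (1 < N)] (hF : Bijective F)
    {y : ZMod N} (hy₁ : y - 1 ∈ descents F) (hy : y ∉ descents F) :
    ∃ G, Bijective G ∧ CircuitEquiv N F G ∧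
      descents G = insert y ((descents F).erase (y - 1)) := by
  rw [mem_descents, isDescent_iff hF, sub_add_cancel] at hy₁
  rw [mem_descents, isDescent_iff hF, not_lt] at hy
  obtain ⟨H, hFH, hH0, -⟩ := exists_reflTransGen_swapMove_apply_eq (F := F) (timeOf hF y).isLt
    (Nat.zero_le _) fun l _ hl => by
      rw [Fin.eta, apply_timeOf hF y]
      have hl' : l < timeOf hF y := hl
      refine ⟨fun h => ?_, fun h => ?_, fun h => ?_⟩
      · exact (hl'.trans hy₁).ne ((timeOf_eq_iff hF).2 h).symm
      · exact hl'.ne ((timeOf_eq_iff hF).2 h).symm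
      · exact (hl'.trans_le hy).ne ((timeOf_eq_iff hF).2 h).symm
  have hH := bijective_of_reflTransGen hFH hF
  refine ⟨H ∘ finRotate N, hH.comp (finRotate N).bijective,
    Relation.EqvGen.trans _ _ _ (circuitEquiv_of_reflTransGen hFH) (.rel _ _ (.inr rfl)), ?_⟩
  rw [descents_comp_finRotate hH, descents_eq_of_reflTransGen hFH,
    show H 0 = y from hH0.trans (apply_timeOf hF y)]

lemma ZMod.val_add_one_of_lt {a : ZMod N} (h : a.val + 1 < N) : (a + 1).val = a.val + 1 := by
  have : Fact (1 < N) := ⟨by omega⟩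
  rw [ZMod.val_add_of_lt (by rwa [ZMod.val_one]), ZMod.val_one]

lemma exists_circuitEquiv_add_one_mem_descents [Fact (1 < N)] {F : Fin N → ZMod N}
    (hF : Bijective F) :
    ∃ G, Bijective G ∧ CircuitEquiv N F G ∧
      ∀ a ∈ descents G, a.val + 1 < N → a + 1 ∈ descents G := by
  by_cases hcl : ∀ a ∈ descents F, a.val + 1 < N → a + 1 ∈ descents F
  · exact ⟨F, hF, .refl _, hcl⟩
  push Not at hcl
  obtain ⟨a, ha, haN, ha₁⟩ := hcl
  obtain ⟨G, hG, hFG, hD⟩ :=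
    exists_circuitEquiv_descents_eq_insert_erase hF (by rwa [add_sub_cancel_right]) ha₁
  have : ∑ b ∈ descents G, (N - b.val) < ∑ b ∈ descents F, (N - b.val) := by
    rw [hD, sum_insert (fun h => ha₁ (mem_of_mem_erase h)), add_sub_cancel_right,
      ← sum_erase_add _ _ ha, ZMod.val_add_one_of_lt haN]
    have := a.val_lt
    omega
  obtain ⟨H, hH, hGH, hcl⟩ := exists_circuitEquiv_add_one_mem_descents hG
  exact ⟨H, hH, .trans _ _ _ hFG hGH, hcl⟩
termination_by ∑ b ∈ descents F, (N - b.val)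

lemma Finset.eq_Ico_of_add_one_mem {s : Finset ℕ} {n : ℕ} (hs : s ⊆ range n)
    (h : ∀ j ∈ s, j + 1 < n → j + 1 ∈ s) : s = Ico (n - #s) n := by
  rcases s.eq_empty_or_nonempty with rfl | hne
  · simp
  have hmin : s.min' hne < n := mem_range.1 (hs (s.min'_mem hne))
  have hs' : s = Ico (s.min' hne) n := by
    refine Subset.antisymm (fun j hj => mem_Ico.2 ⟨s.min'_le j hj, mem_range.1 (hs hj)⟩) ?_
    intro j hj
    obtain ⟨hmj, hjn⟩ := mem_Ico.1 hj
    clear hj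
    induction j, hmj using Nat.le_induction with
    | base => exact s.min'_mem hne
    | succ j _ ih => exact h j (ih (by omega)) hjn
  have hcard : #s = n - s.min' hne := by conv_lhs => rw [hs', Nat.card_Ico]
  rwa [hcard, Nat.sub_sub_self hmin.le]

lemma image_val_eq_Ico [NeZero N] {D : Finset (ZMod N)}
    (hD : ∀ a ∈ D, a.val + 1 < N → a + 1 ∈ D) : D.image ZMod.val = Ico (N - #D) N := by
  rw [← card_image_of_injective D (ZMod.val_injective N)]
  refine Finset.eq_Ico_of_add_one_mem (fun j hj => ?_) fun j hj hjN => ?_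
  · obtain ⟨a, -, rfl⟩ := mem_image.1 hj
    exact mem_range.2 a.val_lt
  · obtain ⟨a, ha, rfl⟩ := mem_image.1 hj
    exact mem_image.2 ⟨a + 1, hD a ha hjN, ZMod.val_add_one_of_lt hjN⟩

lemma descents_eq_of_cinv_eq [Fact (1 < N)] (hF : Bijective F) (hG : Bijective G)
    (hF' : ∀ a ∈ descents F, a.val + 1 < N → a + 1 ∈ descents F)
    (hG' : ∀ a ∈ descents G, a.val + 1 < N → a + 1 ∈ descents G)
    (h : Cinv N F = Cinv N G) : descents F = descents G := by
  rw [cinv_eq_card_descents hF.injective, cinv_eq_card_descents hG.injective] at h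
  exact image_injective (ZMod.val_injective N) <| by
    rw [image_val_eq_Ico hF', image_val_eq_Ico hG', h]

theorem circuitEquiv_of_cinv_eq [Fact (1 < N)] (hF : Bijective F) (hG : Bijective G)
    (h : Cinv N F = Cinv N G) : CircuitEquiv N F G := by
  obtain ⟨F', hF', hFF', hclF⟩ := exists_circuitEquiv_add_one_mem_descents hF
  obtain ⟨G', hG', hGG', hclG⟩ := exists_circuitEquiv_add_one_mem_descents hG
  have hD : descents F' = descents G' := descents_eq_of_cinv_eq hF' hG' hclF hclG <| by
    rw [← hFF'.cinv_eq hF, ← hGG'.cinv_eq hG, h]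
  have hF'G' := circuitEquiv_of_reflTransGen (reflTransGen_swapMove_of_descents_eq hF' hG' hD)
  exact .trans _ _ _ hFF' (.trans _ _ _ hF'G' (.symm _ _ hGG'))

lemma Fin.card_filter_le_val {t : ℕ} (ht : t ≤ N) : #{l : Fin N | t ≤ l.val} = N - t := by
  have h := card_filter_add_card_filter_not (s := (univ : Finset (Fin N))) (fun l => l.val < t)
  simp only [not_lt, Fin.card_filter_val_lt, card_univ, Fintype.card_fin] at h
  omega

lemma pos_of_mul_modEq_one {a b q : ℕ} (hq : 1 < q) (h : a * b ≡ 1 [MOD q]) : 0 < b :=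
  Nat.pos_of_ne_zero fun hb => by
    rw [hb, mul_zero, Nat.ModEq, Nat.zero_mod, Nat.mod_eq_of_lt hq] at h
    exact zero_ne_one h

lemma exists_mul_modEq_one {q r : ℕ} (hq : 1 < q) (hr : r.Coprime q) :
    ∃ b < q, b * r ≡ 1 [MOD q] := by
  obtain ⟨b, hbq, hb⟩ := Nat.exists_mul_mod_eq_one_of_coprime hr hq
  exact ⟨b, hbq, by rw [Nat.ModEq, mul_comm, hb, Nat.mod_eq_of_lt hq]⟩

section Canonical

variable {q r : ℕ}

lemma div_pos_of_dvd [NeZero N] (hq : q ∣ N) : 0 < N / q :=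
  Nat.div_pos (Nat.le_of_dvd (NeZero.pos N) hq) (Nat.pos_of_dvd_of_pos hq (NeZero.pos N))

lemma div_div_lt [NeZero N] (hq : q ∣ N) (l : Fin N) : l / (N / q) < q :=
  (Nat.div_lt_iff_lt_mul (div_pos_of_dvd hq)).2 (by rw [Nat.mul_div_cancel' hq]; exact l.isLt)

lemma castHom_canonicalCircuit (hq : q ∣ N) (l : Fin N) :
    ZMod.castHom hq (ZMod q) (canonicalCircuit N q r l) =
      1 + ((l / (N / q) : ℕ) : ZMod q) * r := by
  rw [canonicalCircuit, map_natCast]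
  push_cast
  rw [ZMod.natCast_self, mul_zero, add_zero]

lemma bijective_canonicalCircuit [NeZero N] (hq : q ∣ N) (hr : r.Coprime q) :
    Bijective (canonicalCircuit N q r) := by
  refine (Fintype.bijective_iff_injective_and_card _).2 ⟨fun l l' h => ?_, by simp⟩
  have hj : l / (N / q) = l' / (N / q) := by
    have h' := congrArg (ZMod.castHom hq (ZMod q)) h
    rwa [castHom_canonicalCircuit, castHom_canonicalCircuit, add_right_inj,
      ((ZMod.isUnit_iff_coprime r q).2 hr).mul_left_inj, ZMod.natCast_eq_natCast_iff',
      Nat.mod_eq_of_lt (div_div_lt hq l), Nat.mod_eq_of_lt (div_div_lt hq l')] at h'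
  have hi : l % (N / q) = l' % (N / q) := by
    have hq0 : q ≠ 0 := (Nat.pos_of_dvd_of_pos hq (NeZero.pos N)).ne'
    have hm := div_pos_of_dvd hq
    have h' := (ZMod.natCast_eq_natCast_iff _ _ _).1 h
    rw [hj] at h'
    have h'' : l % (N / q) * q ≡ l' % (N / q) * q [MOD N / q * q] := by
      rw [Nat.div_mul_cancel hq]
      exact Nat.ModEq.add_left_cancel' _ h'
    exact (Nat.ModEq.mul_right_cancel' hq0 h'').eq_of_lt_of_lt (Nat.mod_lt _ hm) (Nat.mod_lt _ hm)
  exact Fin.ext (by rw [← Nat.div_add_mod l (N / q), ← Nat.div_add_mod l' (N / q), hj, hi])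

lemma div_div_eq_of_canonicalCircuit_eq_add_one [NeZero N] (hq : q ∣ N) {b : ℕ}
    (hb : b * r ≡ 1 [MOD q]) {l l' : Fin N}
    (h : canonicalCircuit N q r l' = canonicalCircuit N q r l + 1) :
    l' / (N / q) = (l / (N / q) + b) % q := by
  have hbr : (b : ZMod q) * r = 1 := by exact_mod_cast (ZMod.natCast_eq_natCast_iff _ _ _).2 hb
  have hr : IsUnit (r : ZMod q) :=
    (ZMod.isUnit_iff_coprime r q).2 (Nat.coprime_of_mul_modEq_one b (by rwa [mul_comm]))
  have h' := congrArg (ZMod.castHom hq (ZMod q)) h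
  rw [map_add, map_one, castHom_canonicalCircuit, castHom_canonicalCircuit] at h'
  have : ((l' / (N / q) : ℕ) : ZMod q) = ((l / (N / q) + b : ℕ) : ZMod q) := by
    refine hr.mul_left_inj.1 ?_
    push_cast
    linear_combination h' - hbr
  rwa [ZMod.natCast_eq_natCast_iff', Nat.mod_eq_of_lt (div_div_lt hq l')] at this

lemma exists_lt_canonicalCircuit_eq_add_one_iff [NeZero N] (hq : q ∣ N) (hq1 : 1 < q) {b : ℕ}
    (hb : b * r ≡ 1 [MOD q]) (hbq : b < q) (l : Fin N) :
    (∃ k < l, canonicalCircuit N q r k = canonicalCircuit N q r l + 1) ↔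
      q ≤ l / (N / q) + b := by
  have hF := bijective_canonicalCircuit hq (Nat.coprime_of_mul_modEq_one b (by rwa [mul_comm]))
  obtain ⟨l', hl'⟩ := hF.2 (canonicalCircuit N q r l + 1)
  have hj := div_div_eq_of_canonicalCircuit_eq_add_one hq hb hl'
  have hb0 : 0 < b := pos_of_mul_modEq_one hq1 (by rwa [mul_comm] at hb)
  have hjl := div_div_lt hq l
  rw [show (∃ k < l, canonicalCircuit N q r k = canonicalCircuit N q r l + 1) ↔ l' < l from
    ⟨fun ⟨k, hk, hkF⟩ => hF.1 (hkF.trans hl'.symm) ▸ hk, fun h => ⟨l', h, hl'⟩⟩]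
  constructor
  · intro h
    by_contra! h2
    rw [Nat.mod_eq_of_lt h2] at hj
    exact (Nat.lt_of_div_lt_div (c := N / q) (by omega)).not_gt h
  · intro h
    refine Nat.lt_of_div_lt_div (c := N / q) ?_
    rw [hj, Nat.mod_eq_sub_mod h, Nat.mod_eq_of_lt (by omega)]
    omega

lemma cinv_canonicalCircuit [NeZero N] (hq : q ∣ N) (hq1 : 1 < q) {b : ℕ}
    (hb : b * r ≡ 1 [MOD q]) (hbq : b < q) : Cinv N (canonicalCircuit N q r) = N / q * b := by
  have hm := div_pos_of_dvd hq
  have hqb (l : Fin N) : q ≤ l / (N / q) + b ↔ (q - b) * (N / q) ≤ l := by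
    rw [← Nat.le_div_iff_mul_le hm]
    omega
  have hN : q * (N / q) = N := Nat.mul_div_cancel' hq
  rw [Cinv, filter_congr fun l _ =>
      (exists_lt_canonicalCircuit_eq_add_one_iff hq hq1 hb hbq l).trans (hqb l),
    Fin.card_filter_le_val ((Nat.mul_le_mul_right _ (Nat.sub_le q b)).trans_eq hN)]
  generalize N / q = m at hN ⊢
  rw [← hN, Nat.sub_mul, Nat.sub_sub_self (Nat.mul_le_mul_right _ hbq.le), mul_comm]

end Canonical

lemma gcd_div_mul_eq {q b : ℕ} (hq : q ∣ N) (hb : b.Coprime q) :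
    Nat.gcd (N / q * b) N = N / q := by
  calc Nat.gcd (N / q * b) N = Nat.gcd (N / q * b) (N / q * q) := by rw [Nat.div_mul_cancel hq]
    _ = N / q := by rw [Nat.gcd_mul_left, hb, mul_one]

lemma exists_mem_QN_div_mul_eq {c : ℕ} (hc : 1 ≤ c) (hcN : c < N) :
    ∃ q r b, (q, r) ∈ QN N ∧ b < q ∧ b * r ≡ 1 [MOD q] ∧ N / q * b = c := by
  have hg : 0 < Nat.gcd c N := Nat.gcd_pos_of_pos_left _ hc
  have hcop := Nat.coprime_div_gcd_div_gcd hg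
  have hgc := Nat.gcd_dvd_left c N
  have hgN := Nat.gcd_dvd_right c N
  generalize Nat.gcd c N = g at hg hcop hgc hgN
  have hNg : g * (N / g) = N := Nat.mul_div_cancel' hgN
  have hcg : g * (c / g) = c := Nat.mul_div_cancel' hgc
  have hbq : c / g < N / g := Nat.lt_of_mul_lt_mul_left (a := g) (by omega)
  have hb : 0 < c / g := Nat.pos_of_ne_zero fun h => by rw [h, mul_zero] at hcg; omega
  obtain ⟨r, hrq, hr⟩ := exists_mul_modEq_one (by omega) hcop
  refine ⟨N / g, r, c / g, ⟨by omega, Nat.div_le_self _ _, Nat.div_dvd_of_dvd hgN,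
      pos_of_mul_modEq_one (a := c / g) (q := N / g) (by omega) (by rwa [mul_comm]), hrq,
      (Nat.coprime_of_mul_modEq_one _ hr).symm⟩, hbq, by rwa [mul_comm], ?_⟩
  rw [Nat.div_div_self hgN (by omega), hcg]

lemma eq_of_div_mul_eq [NeZero N] {q r q' r' b b' : ℕ} (hq : q ∣ N) (hq' : q' ∣ N)
    (hrq : r < q) (hrq' : r' < q') (hb : b * r ≡ 1 [MOD q]) (hb' : b' * r' ≡ 1 [MOD q'])
    (h : N / q * b = N / q' * b') : q = q' ∧ r = r' := by
  have hm : N / q = N / q' := by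
    rw [← gcd_div_mul_eq hq (Nat.coprime_of_mul_modEq_one _ hb),
      ← gcd_div_mul_eq hq' (Nat.coprime_of_mul_modEq_one _ hb'), h]
  obtain rfl : q = q' := by
    rw [← Nat.div_div_self hq (NeZero.ne N), hm, Nat.div_div_self hq' (NeZero.ne N)]
  obtain rfl : b = b' := Nat.eq_of_mul_eq_mul_left (div_pos_of_dvd hq) h
  have hrr' : r ≡ r' [MOD q] := Nat.ModEq.cancel_left_of_coprime
    (Nat.coprime_comm.1 (Nat.coprime_of_mul_modEq_one _ hb)) (hb.trans hb'.symm)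
  exact ⟨rfl, hrr'.eq_of_lt_of_lt hrq hrq'⟩

lemma bijective_canonicalCircuit_of_mem_QN [NeZero N] {qr : ℕ × ℕ} (h : qr ∈ QN N) :
    Bijective (canonicalCircuit N qr.1 qr.2) := by
  obtain ⟨-, -, hqN, -, -, hqr⟩ := h
  exact bijective_canonicalCircuit hqN (Nat.coprime_comm.1 hqr)

lemma exists_mem_QN_cinv_canonicalCircuit_eq [NeZero N] {c : ℕ} (hc : 1 ≤ c) (hcN : c < N) :
    ∃ qr ∈ QN N, Cinv N (canonicalCircuit N qr.1 qr.2) = c := by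
  obtain ⟨q, r, b, hqr, hbq, hb, rfl⟩ := exists_mem_QN_div_mul_eq hc hcN
  exact ⟨(q, r), hqr, cinv_canonicalCircuit hqr.2.2.1 hqr.1 hb hbq⟩

lemma injOn_cinv_canonicalCircuit [NeZero N] :
    Set.InjOn (fun qr : ℕ × ℕ => Cinv N (canonicalCircuit N qr.1 qr.2)) (QN N) := by
  rintro ⟨q, r⟩ ⟨hq, -, hqN, -, hrq, hqr⟩ ⟨q', r'⟩ ⟨hq', -, hqN', -, hrq', hqr'⟩ h
  obtain ⟨b, hbq, hb⟩ := exists_mul_modEq_one hq (Nat.coprime_comm.1 hqr)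
  obtain ⟨b', hbq', hb'⟩ := exists_mul_modEq_one hq' (Nat.coprime_comm.1 hqr')
  dsimp only at h
  rw [cinv_canonicalCircuit hqN hq hb hbq, cinv_canonicalCircuit hqN' hq' hb' hbq'] at h
  obtain ⟨rfl, rfl⟩ := eq_of_div_mul_eq hqN hqN' hrq hrq' hb hb' h
  rfl

/-- Every simple circuit on `N ≥ 2` sites is equivalent to exactly one of
the `N−1` canonical circuits `F_{q,r}` with `(q,r) ∈ Q_N`. -/
theorem classification_canonical (N : ℕ) (hN : 2 ≤ N)
    (F : Fin N → ZMod N) (hF : IsSimpleCircuit N F) :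
    (∃ qr ∈ QN N, CircuitEquiv N F (canonicalCircuit N qr.1 qr.2)) ∧
    (∀ qr ∈ QN N, ∀ qr' ∈ QN N, qr ≠ qr' →
      ¬ CircuitEquiv N (canonicalCircuit N qr.1 qr.2) (canonicalCircuit N qr'.1 qr'.2)) := by
  have : Fact (1 < N) := ⟨hN⟩
  refine ⟨?_, fun qr hqr qr' hqr' hne h => hne <| injOn_cinv_canonicalCircuit hqr hqr' <|
    h.cinv_eq (bijective_canonicalCircuit_of_mem_QN hqr)⟩
  obtain ⟨qr, hqr, hc⟩ := exists_mem_QN_cinv_canonicalCircuit_eq (one_le_cinv hF) (cinv_lt hF)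
  exact ⟨qr, hqr, circuitEquiv_of_cinv_eq hF (bijective_canonicalCircuit_of_mem_QN hqr) hc.symm⟩
end

section
/- The invariant C is unchanged by a cyclic shift: for every simple circuit (i_1, …, i_N) on N sites, C(i_1, i_2, …, i_N) = C(i_2, …, i_N, i_1). -/
/-!
Since `F` is a bijection, the earlier entry equal to `F l + 1`, if any, sits at time `s l` for the
successor permutation `s = F⁻¹ ∘ (· + 1) ∘ F`, so `C(F)` counts the `l` with `s l < l`. The shifted
circuit has successor permutation `ρ⁻¹ s ρ`, where `ρ` rotates time. Relabelling time by `ρ⁻¹` only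
moves time `0` from the first to the last place, so the comparison `s l < l` changes only for
`l = 0` (which starts to count) and for `l = s⁻¹ 0` (which stops counting).
-/

open Finset Function

theorem ite_finRotate_symm_lt_add_ite_eq_zero {n : ℕ} (a b : Fin (n + 1)) :
    ((if (finRotate _).symm a < (finRotate _).symm b then 1 else 0) + if a = 0 then 1 else 0) =
      (if a < b then 1 else 0) + if b = 0 then 1 else 0 := by
  have ha := a.isLt
  have hb := b.isLt
  simp only [finRotate_symm_apply, Fin.lt_def, Fin.coe_sub_one, Fin.ext_iff, Fin.val_zero]
  split_ifs <;> omega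

theorem card_filter_finRotate_conj_lt {N : ℕ} (σ : Equiv.Perm (Fin N)) :
    #{x | (finRotate N).symm (σ (finRotate N x)) < x} = #{x | σ x < x} := by
  cases N with
  | zero => rfl
  | succ n =>
    have key := sum_congr rfl fun m (_ : m ∈ univ) =>
      ite_finRotate_symm_lt_add_ite_eq_zero (σ m) m
    rw [sum_add_distrib, sum_add_distrib, Equiv.sum_comp σ (fun a => if a = 0 then 1 else 0)] at key
    rw [card_filter, card_filter, ← add_right_cancel key, ← Equiv.sum_comp (finRotate _).symm]
    simp only [Equiv.apply_symm_apply]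

theorem Cinv_eq_card_filter_lt {N : ℕ} {F : Fin N → ZMod N} (hF : Injective F)
    {s : Fin N → Fin N} (hs : ∀ l, F (s l) = F l + 1) : Cinv N F = #{l | s l < l} := by
  unfold Cinv
  congr 1
  refine filter_congr fun l _ => ⟨?_, fun h => ⟨s l, h, hs l⟩⟩
  rintro ⟨k, hkl, hk⟩
  rwa [hF (hk.trans (hs l).symm)] at hkl

theorem Cinv_cyclic_shift_general (N : ℕ)
    (F : Fin N → ZMod N) (hF : IsSimpleCircuit N F) :
    Cinv N F = Cinv N (F ∘ finRotate N) := by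
  let e := Equiv.ofBijective F hF
  let s : Equiv.Perm (Fin N) := e.symm.permCongr (Equiv.addRight 1)
  have hs : ∀ l, F (s l) = F l + 1 := fun l => e.apply_symm_apply _
  have hs_shift : ∀ l, (F ∘ finRotate N) ((finRotate N).symm (s (finRotate N l))) =
      (F ∘ finRotate N) l + 1 := fun l => by
    simp only [comp_apply, Equiv.apply_symm_apply, hs]
  rw [Cinv_eq_card_filter_lt hF.injective hs,
    Cinv_eq_card_filter_lt (hF.injective.comp (finRotate N).injective) hs_shift,
    card_filter_finRotate_conj_lt]

/-- The invariant `C` is unchanged by a cyclic shift. -/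
theorem Cinv_cyclic_shift (N : ℕ) (hN : 2 ≤ N)
    (F : Fin N → ZMod N) (hF : IsSimpleCircuit N F) :
    Cinv N F = Cinv N (F ∘ finRotate N) :=
  Cinv_cyclic_shift_general N F hF
end

section
/- The invariant C is unchanged by swapping time-adjacent commuting gates: if (i_1, …, i_N) is a simple circuit on N sites and i_k − i_{k+1} ≢ −1, 0, 1 (mod N) for some k ∈ {1, …, N−1}, then C(i_1, …, i_k, i_{k+1}, …, i_N) = C(i_1, …, i_{k+1}, i_k, …, i_N). -/
open Equiv Finset

theorem Equiv.swap_apply_lt_swap_apply_iff {α : Type*} [LinearOrder α] [DecidableEq α]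
    {a b x y : α} (hab : a ⋖ b) (hxy : ¬(x = a ∧ y = b)) (hyx : ¬(x = b ∧ y = a)) :
    swap a b x < swap a b y ↔ x < y := by
  have h₁ : ∀ c, a < c → b ≤ c := fun _ => hab.ge_of_gt
  have h₂ : ∀ c, c < b → c ≤ a := fun _ => hab.le_of_lt
  have hlt : a < b := hab.lt
  -- `swap a b` could only reverse a pair through an element strictly between `a` and `b`.
  rw [swap_apply_def, swap_apply_def]
  split_ifs <;> grind

theorem Cinv_comp_of_lt_iff {N : ℕ} (F : Fin N → ZMod N) (σ : Perm (Fin N))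
    (hσ : ∀ l m, F (σ m) = F (σ l) + 1 → (σ m < σ l ↔ m < l)) :
    Cinv N (F ∘ σ) = Cinv N F := by
  refine card_equiv σ fun l => ?_
  simp only [mem_filter, mem_univ, true_and, Function.comp_apply]
  refine Iff.trans ?_ σ.surjective.exists.symm
  exact exists_congr fun m => and_congr_left fun hF => (hσ l m hF).symm

theorem Cinv_swap_general (N : ℕ)
    (F : Fin N → ZMod N)
    (k : ℕ) (h : k + 1 < N)
    (hm1 : F ⟨k, Nat.lt_of_succ_lt h⟩ - F ⟨k + 1, h⟩ ≠ -1)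
    (hp1 : F ⟨k, Nat.lt_of_succ_lt h⟩ - F ⟨k + 1, h⟩ ≠ 1) :
    Cinv N F = Cinv N (F ∘ Equiv.swap ⟨k, Nat.lt_of_succ_lt h⟩ ⟨k + 1, h⟩) := by
  refine (Cinv_comp_of_lt_iff F _ fun l m hF => swap_apply_lt_swap_apply_iff (by simp) ?_ ?_).symm
  · rintro ⟨rfl, rfl⟩
    rw [swap_apply_left, swap_apply_right] at hF
    exact hm1 (by rw [hF]; ring)
  · rintro ⟨rfl, rfl⟩
    rw [swap_apply_left, swap_apply_right] at hF
    exact hp1 (by rw [hF]; ring)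

/-- The invariant `C` is unchanged by swapping time-adjacent commuting
gates. -/
theorem Cinv_swap (N : ℕ) (hN : 2 ≤ N)
    (F : Fin N → ZMod N) (hF : IsSimpleCircuit N F)
    (k : ℕ) (h : k + 1 < N)
    (hm1 : F ⟨k, Nat.lt_of_succ_lt h⟩ - F ⟨k + 1, h⟩ ≠ -1)
    (h0 : F ⟨k, Nat.lt_of_succ_lt h⟩ - F ⟨k + 1, h⟩ ≠ 0)
    (hp1 : F ⟨k, Nat.lt_of_succ_lt h⟩ - F ⟨k + 1, h⟩ ≠ 1) :
    Cinv N F = Cinv N (F ∘ Equiv.swap ⟨k, Nat.lt_of_succ_lt h⟩ ⟨k + 1, h⟩) :=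
  Cinv_swap_general N F k h hm1 hp1
end

section
/- For every p ∈ {1, …, N−1}, the double-staircase circuit F_p satisfies C(F_p) = p. -/
/-!
From time `N - p` on the circuit runs down `N, N - 1, …, N - p + 1`, so `F l + 1` has already
occurred: at time `l - 1`, or at time `0` for `F (N - p) = N ≡ 0`. On the ascending run
`1, …, N - p` the value `F l + 1 = l + 2 ≤ N` occurs only later. So exactly the last `p` times
are counted.
-/

theorem natCast_injOn_Icc_one (N : ℕ) : Set.InjOn (Nat.cast : ℕ → ZMod N) (Set.Icc 1 N) := by
  rintro a ⟨ha1, haN⟩ b ⟨hb1, hbN⟩ hab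
  have hmod : a - 1 ≡ b - 1 [MOD N] := by
    refine Nat.ModEq.add_right_cancel' 1 ?_
    rwa [Nat.sub_add_cancel ha1, Nat.sub_add_cancel hb1, ← ZMod.natCast_eq_natCast_iff]
  have := hmod.eq_of_lt_of_lt (by omega) (by omega)
  omega

namespace doubleStaircase

variable {N p : ℕ} {l : Fin N}

theorem apply_of_lt (hl : l.val < N - p) : doubleStaircase N p l = ((l.val + 1 : ℕ) : ZMod N) :=
  if_pos hl

theorem apply_of_le (hl : N - p ≤ l.val) :
    doubleStaircase N p l = ((2 * N - p - l.val : ℕ) : ZMod N) :=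
  if_neg (Nat.not_lt.mpr hl)

theorem not_exists_earlier_succ (hp1 : 1 ≤ p) (hl : l.val < N - p) :
    ¬ ∃ k : Fin N, k < l ∧ doubleStaircase N p k = doubleStaircase N p l + 1 := by
  rintro ⟨k, hk, heq⟩
  rw [Fin.lt_def] at hk
  rw [apply_of_lt (hk.trans hl), apply_of_lt hl] at heq
  have hcast : ((k.val + 1 : ℕ) : ZMod N) = ((l.val + 2 : ℕ) : ZMod N) := by
    push_cast at heq ⊢
    linear_combination heq
  have := natCast_injOn_Icc_one N ⟨by omega, by omega⟩ ⟨by omega, by omega⟩ hcast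
  omega

theorem exists_earlier_succ (hp : p ≤ N - 1) (hl : N - p ≤ l.val) :
    ∃ k : Fin N, k < l ∧ doubleStaircase N p k = doubleStaircase N p l + 1 := by
  rcases hl.eq_or_lt with hstart | hdesc
  · refine ⟨⟨0, by omega⟩, Fin.mk_lt_of_lt_val (by omega), ?_⟩
    rw [apply_of_lt (show 0 < N - p by omega), apply_of_le hl,
      show 2 * N - p - l.val = N by omega, ZMod.natCast_self]
    simp
  · refine ⟨⟨l.val - 1, by omega⟩, Fin.mk_lt_of_lt_val (by omega), ?_⟩
    rw [apply_of_le (show N - p ≤ l.val - 1 by omega), apply_of_le hl,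
      show 2 * N - p - (l.val - 1) = 2 * N - p - l.val + 1 by omega]
    push_cast
    rfl

end doubleStaircase

theorem Cinv_doubleStaircase_general (N p : ℕ) (hp1 : 1 ≤ p) (hp : p ≤ N - 1) :
    Cinv N (doubleStaircase N p) = p := by
  have hstart : N - p < N := by omega
  have hcounted : ∀ l : Fin N,
      (∃ k : Fin N, k < l ∧ doubleStaircase N p k = doubleStaircase N p l + 1) ↔
        (⟨N - p, hstart⟩ : Fin N) ≤ l := fun l =>
    ⟨fun h => Fin.le_def.mpr <|
        not_lt.mp fun hl => doubleStaircase.not_exists_earlier_succ hp1 hl h,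
      fun h => doubleStaircase.exists_earlier_succ hp (Fin.le_def.mp h)⟩
  rw [Cinv, Finset.filter_congr fun l _ => hcounted l, Finset.filter_le_eq_Ici, Fin.card_Ici]
  exact Nat.sub_sub_self (by omega)

/-- For every `p ∈ {1, …, N−1}`, the double staircase circuit `F_p`
satisfies `C(F_p) = p`. -/
theorem Cinv_doubleStaircase (N p : ℕ) (hN : 2 ≤ N) (hp1 : 1 ≤ p) (hp : p ≤ N - 1) :
    Cinv N (doubleStaircase N p) = p :=
  Cinv_doubleStaircase_general N p hp1 hp
end

section
/- For every (q,r) ∈ Q_N, the canonical circuit F_{q,r} is a simple circuit; equivalently, the map sending the pair (j,i) with 0 ≤ j ≤ q−1 and 0 ≤ i ≤ N/q − 1 to the residue 1 + j·r + i·q modulo N is a bijection onto ℤ/Nℤ. -/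
/-- Read modulo `q`, the congruence pins down `j` (as `r` is a unit mod `q`); then, `j` being
known, it says `i * q ≡ i' * q [MOD (N / q) * q]`, which pins down `i`. -/
theorem Nat.eq_of_add_mul_add_mul_modEq {N q r a j₁ j₂ i₁ i₂ : ℕ} (hq : q ∣ N)
    (hqr : q.Coprime r) (hj₁ : j₁ < q) (hj₂ : j₂ < q) (hi₁ : i₁ < N / q) (hi₂ : i₂ < N / q)
    (h : a + j₁ * r + i₁ * q ≡ a + j₂ * r + i₂ * q [MOD N]) : j₁ = j₂ ∧ i₁ = i₂ := by
  rw [← Nat.div_mul_cancel hq] at h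
  obtain rfl : j₁ = j₂ := by
    have hmod_q : a + j₁ * r ≡ a + j₂ * r [MOD q] := by
      simpa only [Nat.ModEq, Nat.add_mul_mod_self_right] using h.of_mul_left (N / q)
    exact ((hmod_q.add_left_cancel' a).cancel_right_of_coprime hqr).eq_of_lt_of_lt hj₁ hj₂
  exact ⟨rfl, ((h.add_left_cancel' _).mul_right_cancel' (by omega)).eq_of_lt_of_lt hi₁ hi₂⟩

theorem bijective_natCast_add_mul_add_mul {N q r : ℕ} [NeZero N] (hq : q ∣ N)
    (hqr : q.Coprime r) (a : ℕ) :
    Function.Bijective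
      (fun ji : Fin q × Fin (N / q) => ((a + ji.1.val * r + ji.2.val * q : ℕ) : ZMod N)) := by
  refine (Fintype.bijective_iff_injective_and_card _).mpr ⟨?_, ?_⟩
  · rintro ⟨j₁, i₁⟩ ⟨j₂, i₂⟩ h
    obtain ⟨hj, hi⟩ := Nat.eq_of_add_mul_add_mul_modEq hq hqr j₁.isLt j₂.isLt i₁.isLt i₂.isLt
      ((ZMod.natCast_eq_natCast_iff _ _ _).mp h)
    simp only [Prod.ext_iff, Fin.ext_iff, hj, hi, and_self]
  · simp only [Fintype.card_prod, Fintype.card_fin, ZMod.card, Nat.mul_div_cancel' hq]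

theorem canonicalCircuit_eq_comp {N q : ℕ} (hq : q ∣ N) (r : ℕ) :
    canonicalCircuit N q r =
      (fun ji : Fin q × Fin (N / q) => ((1 + ji.1.val * r + ji.2.val * q : ℕ) : ZMod N)) ∘
        ((finCongr (Nat.mul_div_cancel' hq).symm).trans finProdFinEquiv.symm) :=
  rfl

theorem canonicalCircuit_simple_general (N : ℕ)
    (q r : ℕ) (hqr : (q, r) ∈ QN N) :
    IsSimpleCircuit N (canonicalCircuit N q r) ∧
    Function.Bijective
      (fun ji : Fin q × Fin (N / q) => ((1 + ji.1.val * r + ji.2.val * q : ℕ) : ZMod N)) := by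
  obtain ⟨hq2, hqN, hq, -, -, hqr⟩ := hqr
  have : NeZero N := ⟨by omega⟩
  have hgrid := bijective_natCast_add_mul_add_mul hq hqr 1
  exact ⟨canonicalCircuit_eq_comp hq r ▸ hgrid.comp (Equiv.bijective _), hgrid⟩

/-- For every `(q,r) ∈ Q_N`, the canonical circuit `F_{q,r}` is a simple
circuit; equivalently, `(j,i) ↦ 1 + j·r + i·q (mod N)` is a bijection onto `ZMod N`. -/
theorem canonicalCircuit_simple (N : ℕ) (hN : 2 ≤ N)
    (q r : ℕ) (hqr : (q, r) ∈ QN N) :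
    IsSimpleCircuit N (canonicalCircuit N q r) ∧
    Function.Bijective
      (fun ji : Fin q × Fin (N / q) => ((1 + ji.1.val * r + ji.2.val * q : ℕ) : ZMod N)) :=
  canonicalCircuit_simple_general N q r hqr
end

section
/- Let N ≥ 2 and let r satisfy 1 ≤ r < N and gcd(r,N) = 1, and consider the generalized staircase circuit F_{N,r} (the sequence whose l-th entry is the residue 1 + (l−1)·r mod N). Then C(F_{N,r}) = N − k_N + 1, where k_N ∈ {1, …, N} is the unique time index whose entry is the residue 0 (i.e., 1 + (k_N − 1)·r ≡ 0 mod N). Moreover C(F_{N,r}) equals 1 plus the number of gates appearing after gate 0 in the sequence. -/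
/-!
The entry of `F_{N,r}` at time `l` is `1 + l r`, so the entry at time `k` is one more than the
entry at time `l` iff `k ≡ l + s (mod N)`, where `s ∈ [0, N)` is the inverse of `r` modulo `N`.
Such a `k` comes before `l` iff `l + s` wraps around, i.e. iff `l ≥ N - s`; hence
`C(F_{N,r}) = s`. Finally `(k_N - 1) r ≡ -1` gives `s = N - k_N + 1`.
-/

open Finset

theorem Fin.card_filter_le_val_s8 (n m : ℕ) : #{i : Fin n | m ≤ (i : ℕ)} = n - m := by
  have hsplit := card_filter_add_card_filter_not (s := univ) fun i : Fin n => (i : ℕ) < m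
  simp only [Fin.card_filter_val_lt, not_lt, card_univ, Fintype.card_fin] at hsplit
  omega

theorem Fin.exists_lt_natCast_eq_add_iff {n s : ℕ} (hs : s < n) (l : Fin n) :
    (∃ k : Fin n, k < l ∧ ((k : ℕ) : ZMod n) = (l : ℕ) + s) ↔ n - s ≤ l := by
  have hcast_iff (k : Fin n) : ((k : ℕ) : ZMod n) = (l : ℕ) + s ↔ (k : ℕ) = ((l : ℕ) + s) % n := by
    rw [← Nat.cast_add, ZMod.natCast_eq_natCast_iff', Nat.mod_eq_of_lt k.isLt]
  simp only [hcast_iff]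
  constructor
  · rintro ⟨k, hkl, hk⟩
    by_contra! hwrap
    rw [Nat.mod_eq_of_lt (by omega)] at hk
    rw [Fin.lt_def] at hkl
    omega
  · intro hwrap
    have hmod : ((l : ℕ) + s) % n = l + s - n := by
      rw [Nat.mod_eq_sub_mod (by omega), Nat.mod_eq_of_lt (by omega)]
    exact ⟨⟨l + s - n, by omega⟩, by rw [Fin.lt_def]; dsimp only; omega, hmod.symm⟩

theorem staircase_eq_add_one_iff {N r s : ℕ} (hsr : (s : ZMod N) * r = 1) (k l : Fin N) :
    staircase N r k = staircase N r l + 1 ↔ ((k : ℕ) : ZMod N) = (l : ℕ) + s := by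
  simp only [staircase, Nat.cast_add, Nat.cast_one, Nat.cast_mul]
  constructor
  · intro h
    linear_combination (s : ZMod N) * h - (((k : ℕ) : ZMod N) - (l : ℕ)) * hsr
  · intro h
    linear_combination (r : ZMod N) * h + hsr

theorem Cinv_staircase_eq_of_mul_eq_one {N r s : ℕ} (hs : s < N) (hsr : (s : ZMod N) * r = 1) :
    Cinv N (staircase N r) = s := by
  have hmem (l : Fin N) :
      (∃ k : Fin N, k < l ∧ staircase N r k = staircase N r l + 1) ↔ N - s ≤ (l : ℕ) := by
    simp only [staircase_eq_add_one_iff hsr, Fin.exists_lt_natCast_eq_add_iff hs]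
  rw [Cinv, filter_congr fun l _ => hmem l, Fin.card_filter_le_val_s8]
  omega

theorem Cinv_staircase_eq_general (N r : ℕ) (hN : 2 ≤ N)
    (kN : ℕ) (hkN : kN ≤ N)
    (hk : ((1 + (kN - 1) * r : ℕ) : ZMod N) = 0) :
    Cinv N (staircase N r) = N - kN + 1 ∧
    Cinv N (staircase N r) =
      1 + (Finset.univ.filter (fun l : Fin N => kN < l.val + 1)).card := by
  have hkN_two : 2 ≤ kN := by
    by_contra! hsmall
    rw [Nat.sub_eq_zero_of_le (by omega), zero_mul, add_zero, Nat.cast_one] at hk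
    have : Nontrivial (ZMod N) := ZMod.nontrivial_iff.mpr (by omega)
    exact one_ne_zero hk
  -- `N + 1 - kN` is the inverse of `r`, as `(kN - 1) * r ≡ -1`.
  have hinv : ((N + 1 - kN : ℕ) : ZMod N) * r = 1 := by
    have hsum : ((N + 1 - kN + (kN - 1) : ℕ) : ZMod N) = 0 := by
      rw [show N + 1 - kN + (kN - 1) = N by omega, ZMod.natCast_self]
    push_cast at hk hsum
    linear_combination (r : ZMod N) * hsum - hk
  have hC : Cinv N (staircase N r) = N - kN + 1 := by
    rw [Cinv_staircase_eq_of_mul_eq_one (by omega) hinv]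
    omega
  refine ⟨hC, ?_⟩
  simp only [Nat.lt_succ_iff, Fin.card_filter_le_val_s8, hC]
  omega

/-- For the generalized staircase circuit `F_{N,r}`, if `k_N` is the
(1-indexed) time index whose entry is the residue `0`, then `C(F_{N,r}) = N − k_N + 1`;
moreover `C(F_{N,r})` is `1` plus the number of gates appearing after gate `0`. -/
theorem Cinv_staircase_eq (N r : ℕ) (hN : 2 ≤ N) (hr1 : 1 ≤ r) (hrN : r < N)
    (hgcd : Nat.gcd r N = 1)
    (kN : ℕ) (hk1 : 1 ≤ kN) (hkN : kN ≤ N)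
    (hk : ((1 + (kN - 1) * r : ℕ) : ZMod N) = 0) :
    Cinv N (staircase N r) = N - kN + 1 ∧
    Cinv N (staircase N r) =
      1 + (Finset.univ.filter (fun l : Fin N => kN < l.val + 1)).card :=
  Cinv_staircase_eq_general N r hN kN hkN hk
end

section
/- Let G be a group, N ≥ 2 an integer, and s, v ∈ G with s^N = 1. Let q be a divisor of N with q ≥ 2 and let r ≥ 1 be an integer. Then s^{−qr} · ( s^r · (s^q v)^{N/q} )^q = f_{(q−1)r} · f_{(q−2)r} ⋯ f_r · f_0, where v_i := s^{−i} v s^i and f_m := v_{m+(N/q−1)q} ⋯ v_{m+q} · v_m. In particular the Floquet operator F_{q,r} of the canonical circuit equals s^{−qr} times the q-th power of its root F̃_{q,r} := s^r f_0. -/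
/-!
Conjugation by `s` translates gates, `v_{i+m} = s^{-m} v_i s^m`. Unrolling a power as
`(a b)^n = a^n · (a^{-(n-1)} b a^{n-1}) ⋯ (a^{-1} b a) · b` therefore turns `(s^q v)^{N/q}` into
`s^N f_0 = f_0`, and `(s^r f_0)^q` into `s^{qr} f_{(q-1)r} ⋯ f_r f_0`.
-/

/-- The translated gate `v_i := s^{-i} v s^i`. -/
def vgate {G : Type*} [Group G] (s v : G) (i : ℤ) : G := s ^ (-i) * v * s ^ i

/-- The layer `f_m := v_{m+(N/q−1)q} ⋯ v_{m+q} · v_m`. -/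
def layer {G : Type*} [Group G] (s v : G) (N q : ℕ) (m : ℤ) : G :=
  (((List.range (N / q)).reverse).map (fun k => vgate s v (m + (k : ℤ) * (q : ℤ)))).prod

/-- Far-commutation: gates commute unless their site difference is ±1 mod N. -/
def FarCommute {G : Type*} [Group G] (s v : G) (N : ℕ) : Prop :=
  ∀ i j : ℤ, ¬ (i - j ≡ 1 [ZMOD (N : ℤ)]) → ¬ (i - j ≡ -1 [ZMOD (N : ℤ)]) →
    vgate s v i * vgate s v j = vgate s v j * vgate s v i

/-- The Floquet operator `F = f_{(q−1)r} ⋯ f_r · f_0`. -/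
def floquet {G : Type*} [Group G] (s v : G) (N q r : ℕ) : G :=
  (((List.range q).reverse).map (fun j => layer s v N q ((j : ℤ) * (r : ℤ)))).prod

theorem mul_pow_eq_pow_mul_prod_conj {G : Type*} [Group G] (a b : G) (n : ℕ) :
    (a * b) ^ n = a ^ n * ((List.range n).reverse.map fun j => (a ^ j)⁻¹ * b * a ^ j).prod := by
  induction n with
  | zero => simp
  | succ n ih =>
    simp only [pow_succ', ih, List.range_succ, List.reverse_append, List.reverse_singleton,
      List.singleton_append, List.map_cons, List.prod_cons]
    group

universe u in
theorem List.bind_pure_eq_map {α β : Type u} (l : List α) (f : α → β) :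
    (do let a ← l; pure (f a) : List β) = l.map f := by
  rw [bind_pure_comp, List.map_eq_map]

section

variable {G : Type*} [Group G]

-- `layer` and `floquet` cast `List ℕ` to `List ℤ` through the list monad.
theorem layer_eq_prod_map (s v : G) (N q : ℕ) (m : ℤ) :
    layer s v N q m =
      ((List.range (N / q)).reverse.map fun k : ℕ => vgate s v (m + k * q)).prod := by
  rw [layer, List.bind_pure_eq_map, List.map_map]; rfl

theorem floquet_eq_prod_map (s v : G) (N q r : ℕ) :
    floquet s v N q r =
      ((List.range q).reverse.map fun j : ℕ => layer s v N q (j * r)).prod := by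
  rw [floquet, List.bind_pure_eq_map, List.map_map]; rfl

theorem vgate_add (s v : G) (i m : ℤ) :
    vgate s v (i + m) = (s ^ m)⁻¹ * vgate s v i * s ^ m := by
  simp only [vgate, neg_add, zpow_add, zpow_neg]
  group

theorem layer_eq_conj_layer_zero (s v : G) (N q : ℕ) (m : ℤ) :
    layer s v N q m = (s ^ m)⁻¹ * layer s v N q 0 * s ^ m := by
  have hconj (g : G) : (s ^ m)⁻¹ * g * s ^ m = MulAut.conj (s ^ m)⁻¹ g := by
    rw [MulAut.conj_apply, inv_inv]
  rw [hconj, layer_eq_prod_map, layer_eq_prod_map, map_list_prod, List.map_map]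
  congr 2 with k
  rw [Function.comp_apply, ← hconj, zero_add, add_comm, vgate_add]

theorem pow_mul_eq_pow_mul_prod_vgate (s v : G) (q n : ℕ) :
    (s ^ q * v) ^ n =
      s ^ (q * n) * ((List.range n).reverse.map fun k : ℕ => vgate s v (k * q)).prod := by
  rw [mul_pow_eq_pow_mul_prod_conj, ← pow_mul]
  congr 3 with k
  rw [vgate, ← pow_mul, ← zpow_natCast, zpow_neg]
  push_cast
  ring_nf

theorem pow_mul_pow_div_eq_layer_zero {N q : ℕ} {s : G} (v : G) (hs : s ^ N = 1) (hq : q ∣ N) :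
    (s ^ q * v) ^ (N / q) = layer s v N q 0 := by
  simp only [pow_mul_eq_pow_mul_prod_vgate, Nat.mul_div_cancel' hq, hs, one_mul,
    layer_eq_prod_map, zero_add]

theorem inv_pow_mul_pow_layer_zero_eq_floquet (s v : G) (N q r : ℕ) :
    (s ^ (q * r))⁻¹ * (s ^ r * layer s v N q 0) ^ q = floquet s v N q r := by
  rw [mul_pow_eq_pow_mul_prod_conj, ← pow_mul, mul_comm r, inv_mul_cancel_left,
    floquet_eq_prod_map]
  congr 2 with j
  rw [layer_eq_conj_layer_zero s v N q (j * r), ← pow_mul, ← zpow_natCast]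
  push_cast
  rw [mul_comm]

end

theorem floquet_eq_root_pow_general {G : Type*} [Group G] (N : ℕ)
    (s v : G) (hs : s ^ N = 1) (q : ℕ) (hq : q ∣ N)
    (r : ℕ) :
    (s ^ (q * r))⁻¹ * (s ^ r * (s ^ q * v) ^ (N / q)) ^ q = floquet s v N q r ∧
    floquet s v N q r = (s ^ (q * r))⁻¹ * (s ^ r * layer s v N q 0) ^ q := by
  rw [pow_mul_pow_div_eq_layer_zero v hs hq, inv_pow_mul_pow_layer_zero_eq_floquet]
  exact ⟨rfl, rfl⟩

/-- `s^{−qr} (s^r (s^q v)^{N/q})^q = f_{(q−1)r} ⋯ f_r · f_0`; in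
particular the Floquet operator of the canonical circuit equals `s^{−qr}` times the `q`-th
power of its root `F̃_{q,r} = s^r f_0`. -/
theorem floquet_eq_root_pow {G : Type*} [Group G] (N : ℕ) (hN : 2 ≤ N)
    (s v : G) (hs : s ^ N = 1) (q : ℕ) (hq : q ∣ N) (hq2 : 2 ≤ q)
    (r : ℕ) (hr : 1 ≤ r) :
    (s ^ (q * r))⁻¹ * (s ^ r * (s ^ q * v) ^ (N / q)) ^ q = floquet s v N q r ∧
    floquet s v N q r = (s ^ (q * r))⁻¹ * (s ^ r * layer s v N q 0) ^ q :=
  floquet_eq_root_pow_general N s v hs q hq r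
end

section
/- Let G be a group, N ≥ 2 an integer, and s, v ∈ G with s^N = 1, satisfying far-commutation. Let q be a divisor of N with q ≥ 2 and r ≥ 1 an integer. Then the root F̃_{q,r} := s^r f_0 is invariant under translation by q sites: s^{−q} · (s^r f_0) · s^q = s^r f_0. -/
/-!
Conjugation by `s^q` shifts every gate index by `q`, so it carries `f_0 = (v_{N-q} ⋯ v_q) · v_0`
to `f_q = v_N · (v_{N-q} ⋯ v_q)`. Since `v_N = v_0` and `v_0` commutes with every `v_{kq}`
(an index difference divisible by `q ≥ 2` is never `±1` modulo `N`), `f_q = f_0`; and `s^r`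
commutes with `s^q`.
-/

section

variable {G : Type*} [Group G]

theorem List.prod_reverse_map_range_succ_eq_of_commute {f : ℕ → G} {n : ℕ} (hper : f n = f 0)
    (hcomm : ∀ k < n, Commute (f 0) (f k)) :
    ((List.range n).map fun k => f (k + 1)).reverse.prod = ((List.range n).map f).reverse.prod := by
  cases n with
  | zero => rfl
  | succ n =>
    have hrest : Commute (f 0) ((List.range n).map fun k => f (k + 1)).reverse.prod :=
      Commute.list_prod_right _ _ fun x hx => by
        obtain ⟨k, hk, rfl⟩ := List.mem_map.1 (List.mem_reverse.1 hx)
        exact hcomm (k + 1) (by simpa using hk)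
    conv_lhs => rw [List.range_succ]
    conv_rhs => rw [List.range_succ_eq_map]
    simp only [List.map_append, List.map_cons, List.map_map, List.reverse_append,
      List.prod_append, List.map_nil, List.reverse_cons, List.reverse_nil, List.nil_append,
      List.prod_cons, List.prod_nil, mul_one, hper]
    exact hrest.eq

variable (s v : G)

theorem vgate_conj_pow (n : ℕ) (i : ℤ) :
    (s ^ n)⁻¹ * vgate s v i * s ^ n = vgate s v (i + n) := by
  simp only [vgate, neg_add, zpow_add, zpow_neg, zpow_natCast]
  group

theorem vgate_add_of_pow_eq_one {N : ℕ} (hs : s ^ N = 1) (i : ℤ) :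
    vgate s v (i + N) = vgate s v i := by
  simp [vgate, zpow_add, hs]

theorem commute_vgate_of_dvd_sub {N q : ℕ} (hcomm : FarCommute s v N) (hq : q ∣ N)
    (hq2 : 2 ≤ q) {i j : ℤ} (hij : (q : ℤ) ∣ i - j) :
    Commute (vgate s v i) (vgate s v j) := by
  have not_unit_step (e : ℤ) (he : e = 1 ∨ e = -1) : ¬ i - j ≡ e [ZMOD N] := fun h => by
    have hqe : (q : ℤ) ∣ e := by
      simpa using dvd_add hij ((h.of_dvd (Int.natCast_dvd_natCast.2 hq)).dvd)
    have : (q : ℤ) ∣ 1 := by rcases he with rfl | rfl <;> simpa using hqe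
    have := Int.le_of_dvd one_pos this
    omega
  exact hcomm i j (not_unit_step 1 (.inl rfl)) (not_unit_step (-1) (.inr rfl))

-- In `layer`, the cast `(k : ℤ)` coerces the whole index list `List ℕ → List ℤ` via `do`.
theorem layer_eq_prod_reverse (N q : ℕ) (m : ℤ) :
    layer s v N q m =
      ((List.range (N / q)).map fun k : ℕ => vgate s v (m + k * q)).reverse.prod := by
  simp [layer, ← List.map_eq_flatMap, List.map_reverse, Function.comp_def]

theorem layer_conj_pow (N q n : ℕ) (m : ℤ) :
    (s ^ n)⁻¹ * layer s v N q m * s ^ n = layer s v N q (m + n) := by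
  have hconj :
      (s ^ n)⁻¹ * layer s v N q m * s ^ n = MulAut.conj (s ^ n)⁻¹ (layer s v N q m) := by
    rw [MulAut.conj_apply, inv_inv]
  rw [hconj, layer_eq_prod_reverse, layer_eq_prod_reverse, map_list_prod, List.map_reverse,
    List.map_map]
  congr 3
  funext k
  simp only [Function.comp_apply, MulAut.conj_apply, inv_inv, vgate_conj_pow]
  ring_nf

theorem layer_add_stride {N q : ℕ} (hs : s ^ N = 1) (hcomm : FarCommute s v N) (hq : q ∣ N)
    (hq2 : 2 ≤ q) (m : ℤ) : layer s v N q (m + q) = layer s v N q m := by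
  simp only [layer_eq_prod_reverse]
  have hshift : ∀ k : ℕ, m + q + k * q = m + ((k + 1 : ℕ) : ℤ) * q := fun k => by
    push_cast; ring
  simp only [hshift]
  refine List.prod_reverse_map_range_succ_eq_of_commute
    (f := fun k : ℕ => vgate s v (m + k * q)) ?_ ?_
  · rw [← Nat.cast_mul, Nat.div_mul_cancel hq, vgate_add_of_pow_eq_one s v hs]
    simp
  · intro k _
    exact commute_vgate_of_dvd_sub s v hcomm hq hq2 ⟨-k, by ring⟩

end

theorem root_translation_invariant_general {G : Type*} [Group G] (N : ℕ)
    (s v : G) (hs : s ^ N = 1) (hcomm : FarCommute s v N)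
    (q : ℕ) (hq : q ∣ N) (hq2 : 2 ≤ q) (r : ℕ) :
    (s ^ q)⁻¹ * (s ^ r * layer s v N q 0) * s ^ q = s ^ r * layer s v N q 0 := by
  have hsr : Commute (s ^ q)⁻¹ (s ^ r) := (Commute.pow_pow_self s q r).inv_left
  calc (s ^ q)⁻¹ * (s ^ r * layer s v N q 0) * s ^ q
      = s ^ r * ((s ^ q)⁻¹ * layer s v N q 0 * s ^ q) := by
        rw [← mul_assoc, hsr.eq, mul_assoc, mul_assoc, mul_assoc]
    _ = s ^ r * layer s v N q 0 := by
        rw [layer_conj_pow, layer_add_stride s v hs hcomm hq hq2]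

/-- The root `F̃_{q,r} = s^r f_0` is invariant under translation by `q`
sites. -/
theorem root_translation_invariant {G : Type*} [Group G] (N : ℕ) (hN : 2 ≤ N)
    (s v : G) (hs : s ^ N = 1) (hcomm : FarCommute s v N)
    (q : ℕ) (hq : q ∣ N) (hq2 : 2 ≤ q) (r : ℕ) (hr : 1 ≤ r) :
    (s ^ q)⁻¹ * (s ^ r * layer s v N q 0) * s ^ q = s ^ r * layer s v N q 0 :=
  root_translation_invariant_general N s v hs hcomm q hq hq2 r
end
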